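/- Assume α₂ > α₃ and A > B. Let μ₁ > z₀ be the unique solution of the reduced Dirichlet system with data A, and let μ₂ ≥ 0 satisfy erf(μ₂·√(α₁/α₂)) = H(μ₁). Then erf(μ₂·√(α₁/α₃)) < (k₃/k₂)·√(α₂/α₃)·((A−B)/(B−C))·erf(z₀·√(α₁/α₂)). -/

import Mathlib

noncomputable section

/-- The error function `erf x = (2/√π) ∫₀ˣ exp(−s²) ds`. -/
def erf (x : ℝ) : ℝ := (2 / Real.sqrt Real.pi) * ∫ s in (0:ℝ)..x, Real.exp (-(s^2))

/-- The complementary error function. -/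
def erfc (x : ℝ) : ℝ := 1 - erf x

/-- Physical data of the three-phase Stefan problem: positive thermal conductivities,
specific heats, mass density, latent heats, and temperatures `B > C > D`. -/
structure Params where
  k₁ : ℝ
  k₂ : ℝ
  k₃ : ℝ
  c₁ : ℝ
  c₂ : ℝ
  c₃ : ℝ
  ρ : ℝ
  ℓ₁ : ℝ
  ℓ₂ : ℝ
  B : ℝ
  C : ℝ
  D : ℝ
  hk₁ : 0 < k₁
  hk₂ : 0 < k₂
  hk₃ : 0 < k₃
  hc₁ : 0 < c₁
  hc₂ : 0 < c₂
  hc₃ : 0 < c₃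
  hρ : 0 < ρ
  hℓ₁ : 0 < ℓ₁
  hℓ₂ : 0 < ℓ₂
  hBC : C < B
  hCD : D < C

namespace Params

/-- Thermal diffusivity of phase 1. -/
def α₁ (p : Params) : ℝ := p.k₁ / (p.ρ * p.c₁)

/-- Thermal diffusivity of phase 2. -/
def α₂ (p : Params) : ℝ := p.k₂ / (p.ρ * p.c₂)

/-- Thermal diffusivity of phase 3. -/
def α₃ (p : Params) : ℝ := p.k₃ / (p.ρ * p.c₃)

/-- Stefan number `Ste₁ = c₁(C−D)/ℓ₁`. -/
def Ste₁ (p : Params) : ℝ := p.c₁ * (p.C - p.D) / p.ℓ₁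

/-- Stefan number `Ste₂ = c₂(B−C)/ℓ₂`. -/
def Ste₂ (p : Params) : ℝ := p.c₂ * (p.B - p.C) / p.ℓ₂

/-- `φ(z) = z + (Ste₁/√π) exp(−z²)/erfc(z)`. -/
def φ (p : Params) (z : ℝ) : ℝ :=
  z + (p.Ste₁ / Real.sqrt Real.pi) * Real.exp (-(z^2)) / erfc z

/-- `H(z) = erf(z√(α₁/α₂)) − (Ste₂/√π)(ℓ₂/ℓ₁)√(k₂c₁/(k₁c₂)) exp(−z²α₁/α₂)/φ(z)`. -/
def H (p : Params) (z : ℝ) : ℝ :=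
  erf (z * Real.sqrt (p.α₁ / p.α₂)) -
    (p.Ste₂ / Real.sqrt Real.pi) * (p.ℓ₂ / p.ℓ₁) *
      Real.sqrt (p.k₂ * p.c₁ / (p.k₁ * p.c₂)) *
      (Real.exp (-(z^2) * (p.α₁ / p.α₂)) / p.φ z)

/-- `Q(z) = (ℓ₁/ℓ₂) φ(z) exp(z² α₁/α₂)`. -/
def Q (p : Params) (z : ℝ) : ℝ :=
  (p.ℓ₁ / p.ℓ₂) * p.φ z * Real.exp (z^2 * (p.α₁ / p.α₂))

/-- The function `T` arising from the Robin (convective) boundary condition with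
heat-transfer coefficient `h₀` and bulk temperature `Ainf`. -/
def T (p : Params) (h₀ Ainf : ℝ) (z : ℝ) : ℝ :=
  (p.Ste₂ / (Real.sqrt Real.pi * p.c₂)) * ((Ainf - p.B) / (p.B - p.C)) *
    Real.sqrt (p.k₃ * p.c₁ * p.c₃ / p.k₁) *
    (Real.exp (-(z^2) * p.α₁ * (1 / p.α₃ - 1 / p.α₂)) /
      (p.k₃ / (h₀ * Real.sqrt (Real.pi * p.α₃)) + erf (z * Real.sqrt (p.α₁ / p.α₃)))) -
  z * Real.exp (z^2 * (p.α₁ / p.α₂))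

/-- The function `V` arising from the Dirichlet boundary condition with temperature `A`. -/
def V (p : Params) (A : ℝ) (z : ℝ) : ℝ :=
  ((A - p.B) / p.ℓ₂) * Real.sqrt (p.c₁ * p.c₃ * p.k₃ / (Real.pi * p.k₁)) *
    (Real.exp (-(z^2) * (p.α₁ / p.α₃ - p.α₁ / p.α₂)) / erf (z * Real.sqrt (p.α₁ / p.α₃))) -
  z * Real.exp (z^2 * (p.α₁ / p.α₂))

/-- The function `P` arising from the Neumann boundary condition with flux coefficient `q₀`. -/
def P (p : Params) (q₀ : ℝ) (z : ℝ) : ℝ :=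
  Real.exp (z^2 * (p.α₁ / p.α₂)) *
    (-z + (q₀ / p.ℓ₂) * Real.sqrt (p.c₁ / (p.ρ * p.k₁)) * Real.exp (-(z^2) * (p.α₁ / p.α₃)))

/-- Critical heat-transfer coefficient `h₂`. -/
def h2 (p : Params) (Ainf z₀ : ℝ) : ℝ :=
  ((p.B - p.C) / (Ainf - p.B)) *
    Real.sqrt (p.k₂ * p.k₃ * p.c₂ / (Real.pi * p.c₃ * p.α₃)) *
    (1 / erf (z₀ * Real.sqrt (p.α₁ / p.α₂)))

/-- Critical heat-flux coefficient `q₂`. -/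
def q2 (p : Params) (z₀ : ℝ) : ℝ :=
  p.k₂ * (p.B - p.C) / (Real.sqrt (p.α₂ * Real.pi) * erf (z₀ * Real.sqrt (p.α₁ / p.α₂)))

end Params

/-! Since `H(z₀) = 0`, the right-hand side equals `c / Q(z₀)`, where
`c = ((A−B)/ℓ₂)·√(c₁c₃k₃/(πk₁))` is the coefficient in `V`. The system `Q(μ₁) = V(μ₂)` reads
`erf(μ₂√(α₁/α₃))·(Q(μ₁) + μ₂ exp(μ₂²α₁/α₂)) = c·exp(−μ₂²(α₁/α₃ − α₁/α₂)) ≤ c`, the last step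
because `α₃ < α₂`. Finally `Q(z₀) ≤ Q(μ₁)`: `Q` is increasing on `[0, ∞)` because
`exp(−z²)/erfc z` is, which follows from `erfc b ≤ erfc a · exp(a² − b²)` for `a ≤ b`, a shift of
the Gaussian tail integral. -/

open MeasureTheory Set Real

lemma integrable_exp_neg_sq : Integrable fun s : ℝ => exp (-s ^ 2) := by
  simpa using integrable_exp_neg_mul_sq one_pos

lemma erfc_eq_integral_Ioi (x : ℝ) : erfc x = 2 / √π * ∫ s in Ioi x, exp (-s ^ 2) := by
  have hhalf : ∫ s in Ioi (0 : ℝ), exp (-s ^ 2) = √π / 2 := by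
    simpa using integral_gaussian_Ioi 1
  rw [erfc, erf, ← intervalIntegral.integral_Ioi_sub_Ioi' integrable_exp_neg_sq.integrableOn
    integrable_exp_neg_sq.integrableOn, hhalf]
  field_simp
  ring

lemma erfc_pos (x : ℝ) : 0 < erfc x := by
  have hsupp : Function.support (fun s : ℝ => exp (-s ^ 2)) = univ :=
    eq_univ_of_forall fun _ => Function.mem_support.mpr (exp_pos _).ne'
  have htail : 0 < ∫ s in Ioi x, exp (-s ^ 2) := by
    rw [setIntegral_pos_iff_support_of_nonneg_ae (ae_of_all _ fun s => (exp_pos _).le)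
      integrable_exp_neg_sq.integrableOn, hsupp, univ_inter]
    simp
  rw [erfc_eq_integral_Ioi]
  positivity

lemma erf_nonneg {x : ℝ} (hx : 0 ≤ x) : 0 ≤ erf x :=
  mul_nonneg (by positivity) (intervalIntegral.integral_nonneg hx fun _ _ => (exp_pos _).le)

lemma erf_pos {x : ℝ} (hx : 0 < x) : 0 < erf x :=
  mul_pos (by positivity) (intervalIntegral.intervalIntegral_pos_of_pos_on
    integrable_exp_neg_sq.intervalIntegrable (fun _ _ => exp_pos _) hx)

lemma erfc_le_erfc_mul_exp {a b : ℝ} (hab : a ≤ b) : erfc b ≤ erfc a * exp (a ^ 2 - b ^ 2) := by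
  set d := b - a
  have hshift : ∫ s in Ioi b, exp (-s ^ 2) = ∫ s in Ioi a, exp (-(s + d) ^ 2) := by
    have h := (measurePreserving_add_right volume d).setIntegral_preimage_emb
      (measurableEmbedding_addRight d) (fun s => exp (-s ^ 2)) (Ioi b)
    rw [← h, preimage_add_const_Ioi, show b - d = a by ring]
  have hpointwise : ∀ s ∈ Ioi a, exp (-(s + d) ^ 2) ≤ exp (-s ^ 2) * exp (a ^ 2 - b ^ 2) := by
    intro s hs
    rw [← exp_add, exp_le_exp]
    nlinarith [mul_nonneg (sub_nonneg.mpr hab) (sub_nonneg.mpr (le_of_lt hs))]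
  have htail : ∫ s in Ioi b, exp (-s ^ 2) ≤ (∫ s in Ioi a, exp (-s ^ 2)) * exp (a ^ 2 - b ^ 2) := by
    rw [hshift, ← integral_mul_const]
    exact setIntegral_mono_on (integrable_exp_neg_sq.comp_add_right d).integrableOn
      (integrable_exp_neg_sq.integrableOn.mul_const _) measurableSet_Ioi hpointwise
  rw [erfc_eq_integral_Ioi, erfc_eq_integral_Ioi, mul_assoc]
  gcongr

lemma monotone_exp_neg_sq_div_erfc : Monotone fun x => exp (-x ^ 2) / erfc x := by
  intro a b hab
  rw [div_le_div_iff₀ (erfc_pos a) (erfc_pos b)]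
  calc exp (-a ^ 2) * erfc b ≤ exp (-a ^ 2) * (erfc a * exp (a ^ 2 - b ^ 2)) := by
        gcongr; exact erfc_le_erfc_mul_exp hab
    _ = exp (-b ^ 2) * erfc a := by
        rw [mul_left_comm, ← exp_add]
        ring_nf

namespace Params

variable (p : Params)

lemma α₁_pos : 0 < p.α₁ := div_pos p.hk₁ (mul_pos p.hρ p.hc₁)

lemma α₂_pos : 0 < p.α₂ := div_pos p.hk₂ (mul_pos p.hρ p.hc₂)

lemma α₃_pos : 0 < p.α₃ := div_pos p.hk₃ (mul_pos p.hρ p.hc₃)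

lemma Ste₁_pos : 0 < p.Ste₁ := div_pos (mul_pos p.hc₁ (sub_pos.mpr p.hCD)) p.hℓ₁

lemma φ_eq (z : ℝ) : p.φ z = z + p.Ste₁ / √π * (exp (-z ^ 2) / erfc z) := by
  rw [φ, mul_div_assoc]

lemma φ_pos {z : ℝ} (hz : 0 ≤ z) : 0 < p.φ z := by
  have := p.Ste₁_pos
  have := erfc_pos z
  rw [φ_eq]
  positivity

lemma monotone_φ : Monotone p.φ := by
  intro a b hab
  have := p.Ste₁_pos
  rw [φ_eq, φ_eq]
  exact add_le_add hab
    (mul_le_mul_of_nonneg_left (monotone_exp_neg_sq_div_erfc hab) (by positivity))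

lemma Q_pos {z : ℝ} (hz : 0 ≤ z) : 0 < p.Q z := by
  have := p.φ_pos hz
  have := p.hℓ₁
  have := p.hℓ₂
  unfold Q
  positivity

lemma monotoneOn_Q : MonotoneOn p.Q (Ici 0) := by
  intro a (ha : 0 ≤ a) b _ hab
  have := p.φ_pos ha
  have := p.φ_pos (ha.trans hab)
  have := p.hℓ₁
  have := p.hℓ₂
  have := p.α₁_pos
  have := p.α₂_pos
  unfold Q
  exact mul_le_mul (mul_le_mul_of_nonneg_left (p.monotone_φ hab) (by positivity))
    (exp_le_exp.mpr (by gcongr)) (by positivity) (by positivity)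

lemma erf_mul_Q_of_H_eq_zero {z : ℝ} (hz : 0 ≤ z) (hH : p.H z = 0) :
    erf (z * √(p.α₁ / p.α₂)) * p.Q z = p.Ste₂ / √π * √(p.k₂ * p.c₁ / (p.k₁ * p.c₂)) := by
  have := p.φ_pos hz
  have := p.hℓ₁
  have := p.hℓ₂
  rw [H, sub_eq_zero] at hH
  rw [hH, Q, mul_comm (z ^ 2), neg_mul, exp_neg]
  field_simp

lemma sqrt_α₂_div_α₃_mul_sqrt :
    √(p.α₂ / p.α₃) * √(p.k₂ * p.c₁ / (p.k₁ * p.c₂)) =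
      p.k₂ / (p.k₃ * p.c₂) * √π * √(p.c₁ * p.c₃ * p.k₃ / (π * p.k₁)) := by
  have := p.hk₁; have := p.hk₂; have := p.hk₃; have := p.hc₁; have := p.hc₂; have := p.hc₃
  have := p.hρ; have := pi_pos; have := p.α₂_pos; have := p.α₃_pos
  rw [← sq_eq_sq₀ (by positivity) (by positivity)]
  rw [mul_pow, mul_pow, mul_pow, sq_sqrt, sq_sqrt, sq_sqrt, sq_sqrt]
  · unfold α₂ α₃
    field_simp
  all_goals positivity

lemma bound_mul_Q_eq_of_H_eq_zero {A z : ℝ} (hz : 0 ≤ z) (hH : p.H z = 0) :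
    p.k₃ / p.k₂ * √(p.α₂ / p.α₃) * ((A - p.B) / (p.B - p.C)) * erf (z * √(p.α₁ / p.α₂)) *
      p.Q z = (A - p.B) / p.ℓ₂ * √(p.c₁ * p.c₃ * p.k₃ / (π * p.k₁)) := by
  have := p.hk₂; have := p.hk₃; have := p.hc₂; have := p.hℓ₂; have := pi_pos
  have := sub_pos.mpr p.hBC
  rw [mul_assoc, p.erf_mul_Q_of_H_eq_zero hz hH, Ste₂]
  calc _ = p.k₃ * p.c₂ / (p.k₂ * p.ℓ₂ * √π) * (A - p.B) *
        (√(p.α₂ / p.α₃) * √(p.k₂ * p.c₁ / (p.k₁ * p.c₂))) := by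
        field_simp
    _ = _ := by
        rw [sqrt_α₂_div_α₃_mul_sqrt]
        field_simp

lemma erf_mul_Q_lt_of_Q_eq_V {A μ₁ μ₂ : ℝ} (hα : p.α₃ < p.α₂) (hA : p.B < A) (hμ₁ : 0 ≤ μ₁)
    (hμ₂ : 0 ≤ μ₂) (hsys : p.Q μ₁ = p.V A μ₂) :
    erf (μ₂ * √(p.α₁ / p.α₃)) * p.Q μ₁ < (A - p.B) / p.ℓ₂ * √(p.c₁ * p.c₃ * p.k₃ / (π * p.k₁)) := by
  have hQ := p.Q_pos hμ₁
  have hα₁ := p.α₁_pos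
  have hα₃ := p.α₃_pos
  rw [V] at hsys
  have hc : 0 < (A - p.B) / p.ℓ₂ * √(p.c₁ * p.c₃ * p.k₃ / (π * p.k₁)) := by
    have := sub_pos.mpr hA; have := p.hℓ₂; have := p.hc₁; have := p.hc₃; have := p.hk₃
    have := p.hk₁; have := pi_pos
    positivity
  set c := (A - p.B) / p.ℓ₂ * √(p.c₁ * p.c₃ * p.k₃ / (π * p.k₁))
  -- `erf 0 = 0`, so `V A 0` is a division by zero and equals `0`, which rules out `μ₂ = 0`.
  have hμ₂pos : 0 < μ₂ := by
    refine hμ₂.lt_of_ne fun h => ?_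
    subst h
    simp [erf] at hsys
    linarith
  set E := erf (μ₂ * √(p.α₁ / p.α₃))
  have hE : 0 < E := erf_pos (by positivity)
  have hdecay : exp (-μ₂ ^ 2 * (p.α₁ / p.α₃ - p.α₁ / p.α₂)) ≤ 1 := by
    have : p.α₁ / p.α₂ ≤ p.α₁ / p.α₃ := div_le_div_of_nonneg_left hα₁.le hα₃ hα.le
    exact exp_le_one_iff.mpr (by nlinarith [sq_nonneg μ₂])
  have hV : (p.Q μ₁ + μ₂ * exp (μ₂ ^ 2 * (p.α₁ / p.α₂))) * E =
      c * exp (-μ₂ ^ 2 * (p.α₁ / p.α₃ - p.α₁ / p.α₂)) := by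
    rw [hsys]
    field_simp
    ring
  have : 0 < μ₂ * exp (μ₂ ^ 2 * (p.α₁ / p.α₂)) * E := by positivity
  calc E * p.Q μ₁ < (p.Q μ₁ + μ₂ * exp (μ₂ ^ 2 * (p.α₁ / p.α₂))) * E := by linarith
    _ = c * exp (-μ₂ ^ 2 * (p.α₁ / p.α₃ - p.α₁ / p.α₂)) := hV
    _ ≤ c := mul_le_of_le_one_right hc.le hdecay

end Params

theorem dirichlet_mu2_bound_general (p : Params) (A z₀ μ₁ μ₂ : ℝ)
    (hα : p.α₃ < p.α₂) (hA : p.B < A)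
    (hz₀ : 0 < z₀ ∧ p.H z₀ = 0)
    (hμ₁ : z₀ < μ₁) (hμ₂ : 0 ≤ μ₂)
    (hsys : p.Q μ₁ = p.V A μ₂) :
    erf (μ₂ * Real.sqrt (p.α₁ / p.α₃)) <
      (p.k₃ / p.k₂) * Real.sqrt (p.α₂ / p.α₃) * ((A - p.B) / (p.B - p.C)) *
        erf (z₀ * Real.sqrt (p.α₁ / p.α₂)) := by
  obtain ⟨hz₀, hHz₀⟩ := hz₀
  have hμ₁nonneg : 0 ≤ μ₁ := (hz₀.trans hμ₁).le
  refine lt_of_mul_lt_mul_right ?_ (p.Q_pos hz₀.le).le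
  rw [p.bound_mul_Q_eq_of_H_eq_zero hz₀.le hHz₀]
  calc erf (μ₂ * √(p.α₁ / p.α₃)) * p.Q z₀ ≤ erf (μ₂ * √(p.α₁ / p.α₃)) * p.Q μ₁ := by
        gcongr
        · exact erf_nonneg (by have := p.α₁_pos; have := p.α₃_pos; positivity)
        · exact p.monotoneOn_Q hz₀.le hμ₁nonneg hμ₁.le
    _ < _ := p.erf_mul_Q_lt_of_Q_eq_V hα hA hμ₁nonneg hμ₂ hsys

/-- bound on `erf(μ₂√(α₁/α₃))` for the Dirichlet solution. -/
theorem dirichlet_mu2_bound (p : Params) (A z₀ μ₁ μ₂ : ℝ)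
    (hα : p.α₃ < p.α₂) (hA : p.B < A)
    (hz₀ : 0 < z₀ ∧ p.H z₀ = 0)
    (hμ₁ : z₀ < μ₁) (hμ₂ : 0 ≤ μ₂)
    (herf : erf (μ₂ * Real.sqrt (p.α₁ / p.α₂)) = p.H μ₁)
    (hsys : p.Q μ₁ = p.V A μ₂) :
    erf (μ₂ * Real.sqrt (p.α₁ / p.α₃)) <
      (p.k₃ / p.k₂) * Real.sqrt (p.α₂ / p.α₃) * ((A - p.B) / (p.B - p.C)) *
        erf (z₀ * Real.sqrt (p.α₁ / p.α₂)) :=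
  dirichlet_mu2_bound_general p A z₀ μ₁ μ₂ hα hA hz₀ hμ₁ hμ₂ hsys
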